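/- arXiv:2006.01941 — 7 statements merged into one kernel-verified Lean document; each statement's English description precedes it below -/
import Mathlib

section
/- For any function f: F_{2^n} → F_{2^n}, the number of vanishing flats satisfies |VB_{n,f}| = (1/3) · Σ_{a ∈ F_{2^n}*, b ∈ F_{2^n}} C(δ_f(a,b)/2, 2), where C(m,2) = m(m-1)/2. -/
def delta {K : Type*} [Field K] [Fintype K] [DecidableEq K] (f : K → K) (a b : K) : ℕ :=
  (Finset.univ.filter (fun x => f (x + a) + f x = b)).card

def VF {K : Type*} [Field K] [Fintype K] [DecidableEq K] (f : K → K) : Finset (Finset K) :=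
  Finset.univ.filter (fun s => s.card = 4 ∧ s.sum id = 0 ∧ s.sum f = 0)

/-!
Multiplied by 8, both sides count the ordered triples `(x, y, z)` of distinct elements with
`f x + f y + f z + f (x + y + z) = 0`. In characteristic two a 4-set with zero sum is
`{x, y, z, x + y + z}` for any three distinct elements of it, so each vanishing flat is hit by
`4 * 3 * 2 = 24` triples. Grouping the triples instead by `a = x + y` and `b = f x + f y`, a triple
is a choice of `x` in the set `D` of solutions of `f (x + a) + f x = b` (then `y = x + a`) and of
`z ∈ D \ {x, x + a}`, giving `δ (δ - 2) = 8 * C(δ / 2, 2)` triples, as `D` is a union of cosets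
of `{0, a}`.
-/

open Finset

theorem Finset.even_card_of_involution {α : Type*} {s : Finset α} (g : α → α)
    (hg_mem : ∀ x ∈ s, g x ∈ s) (hg_ne : ∀ x ∈ s, g x ≠ x)
    (hg_inv : ∀ x ∈ s, g (g x) = x) : Even #s := by
  rw [← ZMod.natCast_eq_zero_iff_even, card_eq_sum_ones, Nat.cast_sum, Nat.cast_one]
  exact sum_involution (fun x _ => g x) (fun _ _ => by decide) (fun x hx _ => hg_ne x hx)
    hg_mem hg_inv

theorem Nat.eight_mul_choose_two_half {d : ℕ} (hd : Even d) :
    8 * (d / 2).choose 2 = d * (d - 2) := by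
  obtain ⟨m, rfl⟩ := hd
  rw [← two_mul, Nat.mul_div_cancel_left _ two_pos, Nat.choose_two_right,
    show 8 = 4 * 2 from rfl, Nat.mul_assoc,
    Nat.mul_div_cancel' (even_mul_pred_self m).two_dvd, show 2 * m - 2 = 2 * (m - 1) by omega]
  ring

def Finset.distinctTriples {α : Type*} [DecidableEq α] (s : Finset α) :
    Finset (α × α × α) :=
  (s ×ˢ s ×ˢ s).filter fun t => t.1 ≠ t.2.1 ∧ t.1 ≠ t.2.2 ∧ t.2.1 ≠ t.2.2

theorem Finset.card_distinctTriples {α : Type*} [DecidableEq α] (s : Finset α) :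
    #s.distinctTriples = #s * (#s - 1) * (#s - 2) := by
  have h : #s.distinctTriples = #(s.sigma fun x => (s.erase x).offDiag) :=
    card_nbij' (fun t => ⟨t.1, t.2⟩) (fun p => (p.1, p.2))
      (fun t ht => by simp [distinctTriples] at ht ⊢; tauto)
      (fun p hp => by simp [distinctTriples] at hp ⊢; tauto)
      (fun _ _ => rfl) (fun _ _ => rfl)
  rw [h, card_sigma, sum_congr rfl fun x hx => by rw [offDiag_card, card_erase_of_mem hx],
    sum_const, smul_eq_mul, Nat.mul_assoc, ← Nat.mul_sub_one, Nat.sub_sub]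

namespace CharTwo

variable {R : Type*} [Ring R] [CharP R 2]

theorem add_add_ne_self {u v : R} (t : R) (huv : u ≠ v) : t + (u + v) ≠ t :=
  fun h => huv (CharTwo.add_eq_zero.1 (add_eq_left.1 h))

variable [DecidableEq R]

theorem sum_insert_insert_insert_add {M : Type*} [AddCommMonoid M] (g : R → M)
    {x y z : R} (hxy : x ≠ y) (hxz : x ≠ z) (hyz : y ≠ z) :
    ∑ w ∈ {x, y, z, x + y + z}, g w = g x + g y + g z + g (x + y + z) := by
  have hx : x + y + z ≠ x := by rw [add_assoc]; exact add_add_ne_self x hyz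
  have hy : x + y + z ≠ y := by
    rw [show x + y + z = y + (x + z) by abel]; exact add_add_ne_self y hxz
  have hz : x + y + z ≠ z := by rw [add_comm]; exact add_add_ne_self z hxy
  rw [sum_insert (by simp [hxy, hxz, hx.symm]), sum_insert (by simp [hyz, hy.symm]),
    sum_pair hz.symm]
  simp only [add_assoc]

theorem card_insert_insert_insert_add {x y z : R} (hxy : x ≠ y) (hxz : x ≠ z) (hyz : y ≠ z) :
    #({x, y, z, x + y + z} : Finset R) = 4 := by
  rw [card_eq_sum_ones, sum_insert_insert_insert_add _ hxy hxz hyz]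

theorem eq_insert_insert_insert_add {s : Finset R} (hs : #s = 4) (hsum : ∑ w ∈ s, w = 0)
    {x y z : R} (hx : x ∈ s) (hy : y ∈ s) (hz : z ∈ s) (hxy : x ≠ y) (hxz : x ≠ z)
    (hyz : y ≠ z) : s = {x, y, z, x + y + z} := by
  have hsub : {x, y, z} ⊆ s := by simp [insert_subset_iff, hx, hy, hz]
  obtain ⟨w, hw⟩ : ∃ w, s \ {x, y, z} = {w} := by
    rw [← card_eq_one, card_sdiff_of_subset hsub, hs,
      card_insert_of_notMem (by simp [hxy, hxz]), card_pair hyz]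
  rw [← sum_sdiff hsub, hw, sum_singleton, sum_insert (by simp [hxy, hxz]),
    sum_pair hyz, ← add_assoc x, CharTwo.add_eq_zero] at hsum
  rw [← sdiff_union_of_subset hsub, hw, hsum]
  ext
  simp only [mem_union, mem_insert, mem_singleton]
  tauto

end CharTwo

section VanishingFlats

variable {K : Type*} [Field K] [Fintype K] [DecidableEq K]

def derivFiber (f : K → K) (a b : K) : Finset K :=
  univ.filter fun x => f (x + a) + f x = b

@[simp]
theorem mem_derivFiber {f : K → K} {a b x : K} :
    x ∈ derivFiber f a b ↔ f (x + a) + f x = b := by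
  simp [derivFiber]

theorem delta_eq_card_derivFiber (f : K → K) (a b : K) : delta f a b = #(derivFiber f a b) :=
  rfl

def flatOfTriple (t : K × K × K) : Finset K :=
  {t.1, t.2.1, t.2.2, t.1 + t.2.1 + t.2.2}

def zeroSumTriples (f : K → K) : Finset (K × K × K) :=
  univ.distinctTriples.filter fun t => f t.1 + f t.2.1 + f t.2.2 + f (t.1 + t.2.1 + t.2.2) = 0

variable [CharP K 2]

theorem add_mem_derivFiber {f : K → K} {a b x : K} (hx : x ∈ derivFiber f a b) :
    x + a ∈ derivFiber f a b := by
  rw [mem_derivFiber] at hx ⊢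
  rwa [CharTwo.add_cancel_right, add_comm]

theorem even_delta (f : K → K) {a : K} (ha : a ≠ 0) (b : K) : Even (delta f a b) :=
  even_card_of_involution (· + a) (fun _ => add_mem_derivFiber)
    (fun _ _ => by rwa [Ne, add_eq_left]) (fun x _ => CharTwo.add_cancel_right x a)

theorem flatOfTriple_mem_VF {f : K → K} {t : K × K × K} (ht : t ∈ zeroSumTriples f) :
    flatOfTriple t ∈ VF f := by
  obtain ⟨x, y, z⟩ := t
  simp only [zeroSumTriples, distinctTriples, mem_filter, mem_product, mem_univ,
    true_and] at ht
  obtain ⟨⟨hxy, hxz, hyz⟩, hf⟩ := ht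
  simp only [VF, flatOfTriple, mem_filter, mem_univ, true_and]
  refine ⟨CharTwo.card_insert_insert_insert_add hxy hxz hyz, ?_, ?_⟩
  · rw [CharTwo.sum_insert_insert_insert_add id hxy hxz hyz]
    exact CharTwo.add_self_eq_zero (x + y + z)
  · rwa [CharTwo.sum_insert_insert_insert_add f hxy hxz hyz]

theorem filter_flatOfTriple_eq_distinctTriples {f : K → K} {s : Finset K} (hs : s ∈ VF f) :
    {t ∈ zeroSumTriples f | flatOfTriple t = s} = s.distinctTriples := by
  simp only [VF, mem_filter, mem_univ, true_and] at hs
  obtain ⟨hs4, hsum, hfsum⟩ := hs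
  ext ⟨x, y, z⟩
  simp only [zeroSumTriples, distinctTriples, mem_filter, mem_product, mem_univ, true_and]
  constructor
  · rintro ⟨⟨hdistinct, -⟩, rfl⟩
    simp [flatOfTriple, hdistinct]
  · rintro ⟨⟨hx, hy, hz⟩, hxy, hxz, hyz⟩
    have hs := CharTwo.eq_insert_insert_insert_add hs4 hsum hx hy hz hxy hxz hyz
    refine ⟨⟨⟨hxy, hxz, hyz⟩, ?_⟩, hs.symm⟩
    rw [← CharTwo.sum_insert_insert_insert_add f hxy hxz hyz, ← hs, hfsum]

theorem card_zeroSumTriples_eq_mul_card_VF (f : K → K) :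
    #(zeroSumTriples f) = 24 * #(VF f) := by
  rw [card_eq_sum_card_fiberwise fun _ => flatOfTriple_mem_VF, sum_congr rfl fun s hs => by
    rw [filter_flatOfTriple_eq_distinctTriples hs, card_distinctTriples, (mem_filter.1 hs).2.1],
    sum_const, smul_eq_mul, mul_comm]

theorem card_zeroSumTriples_fiber (f : K → K) {a : K} (ha : a ≠ 0) (b : K) :
    #{t ∈ zeroSumTriples f | (t.1 + t.2.1, f t.1 + f t.2.1) = (a, b)} =
      delta f a b * (delta f a b - 2) := by
  set D := derivFiber f a b
  have h : #{t ∈ zeroSumTriples f | (t.1 + t.2.1, f t.1 + f t.2.1) = (a, b)} =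
      #(D.sigma fun x => (D.erase x).erase (x + a)) := by
    refine card_nbij' (fun t => ⟨t.1, t.2.2⟩) (fun p => (p.1, p.1 + a, p.2)) ?_ ?_ ?_ ?_ <;>
      simp only [zeroSumTriples, distinctTriples, D, Set.MapsTo, Set.LeftInvOn, mem_coe,
        mem_filter, mem_sigma, mem_erase, mem_product, mem_univ, mem_derivFiber, true_and,
        Prod.forall, Prod.mk.injEq, Sigma.forall]
    -- in characteristic two: `y = x + a`, and the zero sum says `z ∈ D`
    all_goals grind
  rw [h, card_sigma, delta_eq_card_derivFiber, sum_congr rfl fun x hx => by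
    rw [card_erase_of_mem (mem_erase.2 ⟨by rwa [Ne, add_eq_left], add_mem_derivFiber hx⟩),
      card_erase_of_mem hx], sum_const, smul_eq_mul, Nat.sub_sub]

theorem card_zeroSumTriples_eq_sum_delta (f : K → K) :
    #(zeroSumTriples f) = ∑ a ∈ univ.erase 0, ∑ b, delta f a b * (delta f a b - 2) := by
  have hmaps : ∀ t ∈ zeroSumTriples f,
      (t.1 + t.2.1, f t.1 + f t.2.1) ∈ univ.erase 0 ×ˢ univ := by
    intro t ht
    simp only [zeroSumTriples, distinctTriples, mem_filter] at ht
    simpa [CharTwo.add_eq_zero] using ht.1.2.1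
  rw [card_eq_sum_card_fiberwise hmaps, sum_product]
  exact sum_congr rfl fun a ha => sum_congr rfl fun b _ =>
    card_zeroSumTriples_fiber f (ne_of_mem_erase ha) b

end VanishingFlats

theorem card_vf_eq_sum_choose_general {K : Type*} [Field K] [Fintype K] [DecidableEq K]
    [CharP K 2] (f : K → K) :
    3 * (VF f).card =
      ∑ a ∈ Finset.univ.erase (0 : K), ∑ b : K, Nat.choose (delta f a b / 2) 2 := by
  have h : 24 * #(VF f) =
      8 * ∑ a ∈ univ.erase (0 : K), ∑ b : K, (delta f a b / 2).choose 2 := by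
    rw [← card_zeroSumTriples_eq_mul_card_VF, card_zeroSumTriples_eq_sum_delta, mul_sum]
    refine sum_congr rfl fun a ha => ?_
    rw [mul_sum]
    exact sum_congr rfl fun b _ =>
      (Nat.eight_mul_choose_two_half (even_delta f (ne_of_mem_erase ha) b)).symm
  omega

theorem card_vf_eq_sum_choose {K : Type*} [Field K] [Fintype K] [DecidableEq K]
    (n : ℕ) (hn : 0 < n) (hcard : Fintype.card K = 2 ^ n) [CharP K 2]
    (f : K → K) :
    3 * (VF f).card =
      ∑ a ∈ Finset.univ.erase (0 : K), ∑ b : K, Nat.choose (delta f a b / 2) 2 :=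
  card_vf_eq_sum_choose_general f
end

section
/- Let f: F_{2^n} → F_{2^n}, x ∈ F_{2^n}, a ∈ F_{2^n}*, and b = f(x+a) + f(x). Then the number of vanishing flats of f containing both x and x+a equals δ_f(a,b)/2 − 1. -/
open Finset

namespace CharTwo

variable {R : Type*} [DecidableEq R] {a x y z : R}

def flat [Add R] (x a y : R) : Finset R := {x, x + a} ∪ {y, y + a}

@[simp]
theorem mem_flat [Add R] : z ∈ flat x a y ↔ z = x ∨ z = x + a ∨ z = y ∨ z = y + a := by
  simp only [flat, mem_union, mem_insert, mem_singleton, or_assoc]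

variable [Ring R] [CharP R 2]

theorem flat_add_right (x a y : R) : flat x a (y + a) = flat x a y := by
  rw [flat, flat, CharTwo.add_cancel_right, pair_comm (y + a)]

theorem disjoint_pair_pair (hyx : y ≠ x) (hyxa : y ≠ x + a) :
    Disjoint ({x, x + a} : Finset R) {y, y + a} := by
  simp only [disjoint_left, mem_insert, mem_singleton]
  rintro z (rfl | rfl) (rfl | h)
  · exact hyx rfl
  · exact hyxa (by rw [h, CharTwo.add_cancel_right])
  · exact hyxa rfl
  · exact hyx (add_right_cancel h.symm)

theorem card_flat (ha : a ≠ 0) (hyx : y ≠ x) (hyxa : y ≠ x + a) : #(flat x a y) = 4 := by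
  rw [flat, card_union_of_disjoint (disjoint_pair_pair hyx hyxa), card_pair (left_ne_add.mpr ha),
    card_pair (left_ne_add.mpr ha)]

theorem sum_flat {M : Type*} [AddCommMonoid M] (g : R → M) (ha : a ≠ 0) (hyx : y ≠ x)
    (hyxa : y ≠ x + a) : ∑ z ∈ flat x a y, g z = g x + g (x + a) + (g y + g (y + a)) := by
  rw [flat, sum_union (disjoint_pair_pair hyx hyxa), sum_pair (left_ne_add.mpr ha),
    sum_pair (left_ne_add.mpr ha)]

theorem eq_flat_of_card_eq_four {s : Finset R} (ha : a ≠ 0) (hs : #s = 4)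
    (hsum : ∑ z ∈ s, z = 0) (hx : x ∈ s) (hxa : x + a ∈ s) :
    ∃ y, y ≠ x ∧ y ≠ x + a ∧ s = flat x a y := by
  have hsub : {x, x + a} ⊆ s := insert_subset hx (singleton_subset_iff.mpr hxa)
  obtain ⟨u, v, huv, hrest⟩ : ∃ u v, u ≠ v ∧ s \ {x, x + a} = {u, v} :=
    card_eq_two.mp (by rw [card_sdiff_of_subset hsub, hs, card_pair (left_ne_add.mpr ha)])
  have hu : u ∈ s \ {x, x + a} := by simp [hrest]
  simp only [mem_sdiff, mem_insert, mem_singleton, not_or] at hu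
  -- the elements of `s` sum to `u + v + a`
  have hv : v = u + a := by
    have hsplit := sum_sdiff (f := id) hsub
    rw [hrest, sum_pair huv, sum_pair (left_ne_add.mpr ha)] at hsplit
    simp only [id, hsum, CharTwo.add_cancel_left] at hsplit
    rw [← CharTwo.add_eq_zero.mp hsplit, CharTwo.add_cancel_left]
  refine ⟨u, hu.2.1, hu.2.2, ?_⟩
  rw [flat, ← hv, ← hrest, union_sdiff_of_subset hsub]

theorem flat_eq_flat_iff (hzx : z ≠ x) (hzxa : z ≠ x + a) :
    flat x a z = flat x a y ↔ z = y ∨ z = y + a := by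
  constructor
  · intro h
    have hz : z ∈ flat x a z := by simp
    rw [h, mem_flat] at hz
    simpa only [hzx, hzxa, false_or] using hz
  · rintro (rfl | rfl)
    · rfl
    · exact flat_add_right x a y

theorem add_mem_sdiff_pair {s : Finset R} (hs : ∀ y ∈ s, y + a ∈ s)
    (hy : y ∈ s \ {x, x + a}) : y + a ∈ s \ {x, x + a} := by
  simp only [mem_sdiff, mem_insert, mem_singleton, not_or] at hy ⊢
  refine ⟨hs y hy.1, fun h => hy.2.2 ?_, fun h => hy.2.1 (add_right_cancel h)⟩
  rw [← h, CharTwo.add_cancel_right]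

theorem card_sdiff_pair_eq_two_mul_card_image_flat {s : Finset R} (ha : a ≠ 0)
    (hs : ∀ y ∈ s, y + a ∈ s) :
    #(s \ {x, x + a}) = 2 * #((s \ {x, x + a}).image (flat x a)) := by
  rw [card_eq_sum_card_image (flat x a), sum_const_nat, mul_comm]
  intro t ht
  obtain ⟨y, hy, rfl⟩ := mem_image.mp ht
  have hfiber : {z ∈ s \ {x, x + a} | flat x a z = flat x a y} = {y, y + a} := by
    ext z
    simp only [mem_filter, mem_insert, mem_singleton]
    constructor
    · rintro ⟨hz, hzy⟩
      simp only [mem_sdiff, mem_insert, mem_singleton, not_or] at hz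
      exact (flat_eq_flat_iff hz.2.1 hz.2.2).mp hzy
    · rintro (rfl | rfl)
      · exact ⟨hy, rfl⟩
      · exact ⟨add_mem_sdiff_pair hs hy, flat_add_right x a y⟩
  rw [hfiber, card_pair (left_ne_add.mpr ha)]

end CharTwo

open CharTwo

section

variable {K : Type*} [Field K] [Fintype K] [DecidableEq K] [CharP K 2] {a x y : K}

theorem flat_mem_VF_iff (f : K → K) (ha : a ≠ 0) (hyx : y ≠ x) (hyxa : y ≠ x + a) :
    flat x a y ∈ VF f ↔ f (y + a) + f y = f (x + a) + f x := by
  simp only [VF, mem_filter, mem_univ, true_and, card_flat ha hyx hyxa, sum_flat _ ha hyx hyxa,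
    id, CharTwo.add_cancel_left, CharTwo.add_self_eq_zero, CharTwo.add_eq_zero]
  rw [eq_comm, add_comm (f y), add_comm (f x)]

theorem filter_VF_eq_image (f : K → K) (ha : a ≠ 0) :
    (VF f).filter (fun s => x ∈ s ∧ x + a ∈ s)
      = (({y | f (y + a) + f y = f (x + a) + f x} : Finset K) \ {x, x + a}).image (flat x a) := by
  ext t
  simp only [mem_filter, mem_image, mem_sdiff, mem_univ, true_and, mem_insert, mem_singleton,
    not_or]
  constructor
  · rintro ⟨ht, hxt, hxat⟩
    obtain ⟨hcard, hsum, -⟩ := (mem_filter.mp ht).2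
    obtain ⟨y, hyx, hyxa, rfl⟩ := eq_flat_of_card_eq_four ha hcard hsum hxt hxat
    exact ⟨y, ⟨(flat_mem_VF_iff f ha hyx hyxa).mp ht, hyx, hyxa⟩, rfl⟩
  · rintro ⟨y, ⟨hy, hyx, hyxa⟩, rfl⟩
    exact ⟨(flat_mem_VF_iff f ha hyx hyxa).mpr hy, by simp, by simp⟩

end

theorem card_vf_containing_pair_general {K : Type*} [Field K] [Fintype K] [DecidableEq K]
    [CharP K 2]
    (f : K → K) (x a : K) (ha : a ≠ 0) :
    ((VF f).filter (fun s => x ∈ s ∧ x + a ∈ s)).card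
      = delta f a (f (x + a) + f x) / 2 - 1 := by
  set D : Finset K := {y | f (y + a) + f y = f (x + a) + f x}
  have hD : ∀ y ∈ D, y + a ∈ D := by
    intro y hy
    simp only [D, mem_filter, mem_univ, true_and] at hy ⊢
    rw [CharTwo.add_cancel_right, add_comm, hy]
  have hxD : {x, x + a} ⊆ D := by
    simp only [D, insert_subset_iff, singleton_subset_iff, mem_filter, mem_univ, true_and]
    rw [CharTwo.add_cancel_right, add_comm]
  have hsplit : #(D \ {x, x + a}) + 2 = #D := by
    rw [← card_pair (left_ne_add.mpr ha), card_sdiff_add_card_eq_card hxD]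
  have hpairs := card_sdiff_pair_eq_two_mul_card_image_flat (x := x) ha hD
  rw [filter_VF_eq_image f ha]
  change #((D \ {x, x + a}).image (flat x a)) = #D / 2 - 1
  omega

theorem card_vf_containing_pair {K : Type*} [Field K] [Fintype K] [DecidableEq K]
    (n : ℕ) (hn : 0 < n) (hcard : Fintype.card K = 2 ^ n) [CharP K 2]
    (f : K → K) (x a : K) (ha : a ≠ 0) :
    ((VF f).filter (fun s => x ∈ s ∧ x + a ∈ s)).card
      = delta f a (f (x + a) + f x) / 2 - 1 :=
  card_vf_containing_pair_general f x a ha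
end

section
/- Let f(x) = x^d be a monomial on F_{2^n} that is not APN. Then the number of vanishing flats of f is at least (2^n+1)/3 if n is odd, and at least (2^n−1)/3 if n is even. -/
open Finset Pointwise

def criticalDirections {R : Type*} [Add R] [Zero R] [DecidableEq R] (S : Finset R) :
    Finset R :=
  (S + S).erase 0

lemma card_criticalDirections_le_three {R : Type*} [CommRing R] [CharP R 2] [DecidableEq R]
    {S : Finset R} (hcard : S.card = 4) (hsum : S.sum id = 0) :
    (criticalDirections S).card ≤ 3 := by
  obtain ⟨a, b, c, d, hab, hac, had, hbc, hbd, hcd, rfl⟩ := card_eq_four.mp hcard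
  have hsum' : a + b + c + d = 0 := by
    simpa [sum_insert, hab, hac, had, hbc, hbd, hcd, add_assoc] using hsum
  have h2 : (2 : R) = 0 := CharTwo.two_eq_zero
  have hcd' : c + d = a + b := by linear_combination hsum' - (a + b) * h2
  have hbd' : b + d = a + c := by linear_combination hsum' - (a + c) * h2
  have hbc' : b + c = a + d := by linear_combination hsum' - (a + d) * h2
  refine (card_le_card (t := {a + b, a + c, a + d}) ?_).trans card_le_three
  intro z hz
  obtain ⟨hz0, x, hx, y, hy, rfl⟩ := by
    simpa only [criticalDirections, mem_erase, mem_add] using hz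
  simp only [mem_insert, mem_singleton] at hx hy ⊢
  rcases hx with rfl | rfl | rfl | rfl <;> rcases hy with rfl | rfl | rfl | rfl <;>
    simp_all [CharTwo.add_self_eq_zero, add_comm]

section

variable {K : Type*} [Field K] [Fintype K] [DecidableEq K]

lemma image_mul_mem_VF_pow {d : ℕ} {S : Finset K} (hS : S ∈ VF (fun x : K => x ^ d))
    {c : K} (hc : c ≠ 0) : S.image (c * ·) ∈ VF (fun x : K => x ^ d) := by
  obtain ⟨-, hcard, hsum, hpow⟩ := mem_filter.mp hS
  have hinj : Set.InjOn (c * ·) S := (mul_right_injective₀ hc).injOn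
  refine mem_filter.mpr ⟨mem_univ _, ?_, ?_, ?_⟩
  · rw [card_image_of_injOn hinj, hcard]
  · rw [sum_image hinj]
    change ∑ x ∈ S, c * id x = 0
    rw [← mul_sum, hsum, mul_zero]
  · rw [sum_image hinj]
    simp only [mul_pow, ← mul_sum]
    rw [hpow, mul_zero]

variable [CharP K 2]

lemma exists_mem_VF_of_two_lt_delta {f : K → K} {a b : K} (ha : a ≠ 0)
    (hδ : 2 < delta f a b) : ∃ S ∈ VF f, a ∈ S + S := by
  set T := univ.filter fun x => f (x + a) + f x = b
  have h2 : (2 : K) = 0 := CharTwo.two_eq_zero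
  have hT : ∀ {z}, z ∈ T → f (z + a) + f z = b := fun hz => (mem_filter.mp hz).2
  replace hδ : 2 < T.card := hδ
  obtain ⟨x, hx⟩ : T.Nonempty := card_pos.mp (by omega)
  obtain ⟨y, hyT, hy⟩ : ∃ y ∈ T, y ∉ ({x, x + a} : Finset K) :=
    exists_mem_notMem_of_card_lt_card (card_le_two.trans_lt hδ)
  simp only [mem_insert, mem_singleton, not_or] at hy
  have hxa : x ≠ x + a := by simpa using ha
  have hya : y ≠ y + a := by simpa using ha
  have hdisj : Disjoint ({x, x + a} : Finset K) {y, y + a} := by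
    simp only [disjoint_insert_left, disjoint_insert_right, mem_insert, mem_singleton,
      disjoint_singleton, not_or]
    refine ⟨hy, fun h => hy.2 ?_, fun h => hy.1 (add_right_cancel h).symm⟩
    linear_combination -h - a * h2
  refine ⟨{x, x + a} ∪ {y, y + a}, mem_filter.mpr ⟨mem_univ _, ?_, ?_, ?_⟩, ?_⟩
  · rw [card_union_of_disjoint hdisj, card_pair hxa, card_pair hya]
  · rw [sum_union hdisj, sum_pair hxa, sum_pair hya, id, id, id, id]
    linear_combination (x + y + a) * h2
  · rw [sum_union hdisj, sum_pair hxa, sum_pair hya]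
    linear_combination hT hx + hT hyT + b * h2
  · refine mem_add.mpr ⟨x, by simp, x + a, by simp, ?_⟩
    linear_combination x * h2

lemma exists_mem_VF_pow_of_ne_zero {d : ℕ}
    (hnotAPN : ∃ a b : K, a ≠ 0 ∧ 2 < delta (fun x => x ^ d) a b) {a : K} (ha : a ≠ 0) :
    ∃ S ∈ VF (fun x : K => x ^ d), a ∈ S + S := by
  obtain ⟨a₀, b, ha₀, hδ⟩ := hnotAPN
  obtain ⟨S, hS, ha₀S⟩ := exists_mem_VF_of_two_lt_delta ha₀ hδ
  obtain ⟨x, hx, y, hy, hxy⟩ := mem_add.mp ha₀S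
  have hc : a * a₀⁻¹ ≠ 0 := mul_ne_zero ha (inv_ne_zero ha₀)
  refine ⟨S.image (a * a₀⁻¹ * ·), image_mul_mem_VF_pow hS hc,
    mem_add.mpr ⟨_, mem_image_of_mem _ hx, _, mem_image_of_mem _ hy, ?_⟩⟩
  rw [← mul_add, hxy, mul_assoc, inv_mul_cancel₀ ha₀, mul_one]

lemma card_sub_one_le_three_mul_card_VF {f : K → K}
    (hcover : ∀ a ≠ 0, ∃ S ∈ VF f, a ∈ S + S) :
    Fintype.card K - 1 ≤ 3 * (VF f).card := by
  have hsub : univ.erase (0 : K) ⊆ (VF f).biUnion criticalDirections := by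
    intro a ha
    obtain ⟨S, hS, haS⟩ := hcover a (ne_of_mem_erase ha)
    exact mem_biUnion.mpr ⟨S, hS, mem_erase.mpr ⟨ne_of_mem_erase ha, haS⟩⟩
  calc Fintype.card K - 1 = (univ.erase (0 : K)).card := by
        rw [card_erase_of_mem (mem_univ _), card_univ]
    _ ≤ ((VF f).biUnion criticalDirections).card := card_le_card hsub
    _ ≤ ∑ S ∈ VF f, (criticalDirections S).card := card_biUnion_le
    _ ≤ (VF f).card * 3 := sum_le_card_nsmul _ _ _ fun S hS =>
        have hS := (mem_filter.mp hS).2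
        card_criticalDirections_le_three hS.1 hS.2.1
    _ = 3 * (VF f).card := mul_comm _ _

end

theorem vf_lower_bound_monomial_general {K : Type*} [Field K] [Fintype K] [DecidableEq K]
    (n : ℕ) (hcard : Fintype.card K = 2 ^ n) [CharP K 2]
    (d : ℕ)
    (hnotAPN : ∃ a b : K, a ≠ 0 ∧ 2 < delta (fun x => x ^ d) a b) :
    (Odd n → 2 ^ n + 1 ≤ 3 * (VF (fun x : K => x ^ d)).card) ∧
      (Even n → 2 ^ n - 1 ≤ 3 * (VF (fun x : K => x ^ d)).card) := by
  have hbound := card_sub_one_le_three_mul_card_VF fun _ => exists_mem_VF_pow_of_ne_zero hnotAPN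
  rw [hcard] at hbound
  refine ⟨fun hodd => ?_, fun _ => hbound⟩
  have h3 : 2 + 1 ∣ 2 ^ n + 1 ^ n := hodd.nat_add_dvd_pow_add_pow 2 1
  rw [one_pow] at h3
  omega

theorem vf_lower_bound_monomial {K : Type*} [Field K] [Fintype K] [DecidableEq K]
    (n : ℕ) (hn : 0 < n) (hcard : Fintype.card K = 2 ^ n) [CharP K 2]
    (d : ℕ) (hd : 0 < d)
    (hnotAPN : ∃ a b : K, a ≠ 0 ∧ 2 < delta (fun x => x ^ d) a b) :
    (Odd n → 2 ^ n + 1 ≤ 3 * (VF (fun x : K => x ^ d)).card) ∧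
      (Even n → 2 ^ n - 1 ≤ 3 * (VF (fun x : K => x ^ d)).card) :=
  vf_lower_bound_monomial_general n hcard d hnotAPN
end

section
/- Let n be even and f(x) = x^{2^n−2} (the inverse function, with 0 ↦ 0) on F_{2^n}. Let ζ be a primitive third root of unity in F_{2^n}. Then the vanishing flats of f are exactly the sets {0, β, βζ, βζ^2} for β ∈ F_{2^n}*. In particular, |VB_{n,f}| = (2^n−1)/3. -/
open Finset

theorem FiniteField.pow_card_sub_two_eq_inv {K : Type*} [Field K] [Fintype K]
    (hK : 2 < Fintype.card K) (x : K) : x ^ (Fintype.card K - 2) = x⁻¹ := by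
  rcases eq_or_ne x 0 with rfl | hx
  · rw [zero_pow (by omega), inv_zero]
  · refine eq_inv_of_mul_eq_one_left ?_
    rw [← pow_succ, show Fintype.card K - 2 + 1 = Fintype.card K - 1 by omega]
    exact FiniteField.pow_card_sub_one_eq_one x hx

section CubeRoot

variable {K : Type*} [Field K] {ζ : K}

theorem sq_add_self_add_one_eq_zero_of_pow_three_eq_one (h3 : ζ ^ 3 = 1) (h1 : ζ ≠ 1) :
    ζ ^ 2 + ζ + 1 = 0 :=
  (mul_eq_zero.mp (by linear_combination h3 : (ζ - 1) * (ζ ^ 2 + ζ + 1) = 0)).resolve_left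
    (sub_ne_zero.mpr h1)

theorem eq_mul_or_eq_mul_sq_of_sq_add_mul_add_sq_eq_zero (hζ : ζ ^ 2 + ζ + 1 = 0) {a b : K}
    (h : a ^ 2 + a * b + b ^ 2 = 0) : a = b * ζ ∨ a = b * ζ ^ 2 := by
  have : (a - b * ζ) * (a - b * ζ ^ 2) = 0 := by
    linear_combination h - a * b * hζ + b ^ 2 * (ζ - 1) * hζ
  simpa [sub_eq_zero] using this

theorem sq_add_mul_add_sq_eq_zero_of_inv_add_inv_add_inv_eq_zero {a b c : K} (ha : a ≠ 0)
    (hb : b ≠ 0) (hc : c ≠ 0) (hsum : a + b + c = 0) (hinv : a⁻¹ + b⁻¹ + c⁻¹ = 0) :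
    a ^ 2 + a * b + b ^ 2 = 0 := by
  field_simp at hinv
  linear_combination (a + b) * hsum - hinv

variable [CharP K 2]

theorem inv_add_inv_add_inv_add_inv_ne_zero {a b c d : K} (ha : a ≠ 0) (hb : b ≠ 0)
    (hc : c ≠ 0) (hd : d ≠ 0) (hab : a ≠ b) (hca : c ≠ a) (hcb : c ≠ b)
    (hsum : a + b + c + d = 0) : a⁻¹ + b⁻¹ + c⁻¹ + d⁻¹ ≠ 0 := by
  intro hinv
  have h2 : (2 : K) = 0 := CharTwo.two_eq_zero
  have hcd : c + d = a + b := by linear_combination hsum - (a + b) * h2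
  have hab0 : a + b ≠ 0 := fun h => hab (by linear_combination h - b * h2)
  -- `1/a + 1/b = 1/c + 1/d` with `a + b = c + d ≠ 0` forces `ab = cd`
  have hprod : c * d = a * b := by
    field_simp at hinv
    refine (mul_left_cancel₀ hab0 ?_)
    linear_combination hinv - a * b * hcd - a * b * (a + b) * h2
  have : (c - a) * (c - b) = 0 := by
    linear_combination c * hcd - hprod
  rcases mul_eq_zero.mp this with h | h
  · exact hca (sub_eq_zero.mp h)
  · exact hcb (sub_eq_zero.mp h)

end CubeRoot

section CubeRootFlat

variable {K : Type*} [Field K] [DecidableEq K] {ζ : K}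

def cubeRootFlat (ζ β : K) : Finset K := {0, β, β * ζ, β * ζ ^ 2}

theorem self_mem_cubeRootFlat (ζ β : K) : β ∈ cubeRootFlat ζ β := by
  simp [cubeRootFlat]

theorem cubeRootFlat_mul_zeta (h3 : ζ ^ 3 = 1) (β : K) :
    cubeRootFlat ζ (β * ζ) = cubeRootFlat ζ β := by
  have hβ : β * ζ * ζ ^ 2 = β := by linear_combination β * h3
  rw [cubeRootFlat, cubeRootFlat, hβ, mul_assoc, ← pow_two, insert_comm (β * ζ),
    pair_comm (β * ζ), insert_comm (β * ζ ^ 2), pair_comm (β * ζ ^ 2)]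

theorem cubeRootFlat_eq_of_mem (h3 : ζ ^ 3 = 1) {β x : K} (hx : x ∈ cubeRootFlat ζ β)
    (hx0 : x ≠ 0) : cubeRootFlat ζ x = cubeRootFlat ζ β := by
  simp only [cubeRootFlat, mem_insert, mem_singleton] at hx
  rcases hx with rfl | rfl | rfl | rfl
  · exact absurd rfl hx0
  · rfl
  · exact cubeRootFlat_mul_zeta h3 β
  · rw [pow_two, ← mul_assoc, cubeRootFlat_mul_zeta h3, cubeRootFlat_mul_zeta h3]

theorem sum_cubeRootFlat {M : Type*} [AddCommMonoid M] (h3 : ζ ^ 3 = 1) (h1 : ζ ≠ 1) {β : K}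
    (hβ : β ≠ 0) (g : K → M) :
    ∑ x ∈ cubeRootFlat ζ β, g x = g 0 + g β + g (β * ζ) + g (β * ζ ^ 2) := by
  have hζ0 : ζ ≠ 0 := by rintro rfl; simp at h3
  have hζ2 : ζ ^ 2 ≠ 1 := fun h => h1 (by linear_combination h3 - ζ * h)
  have hζζ2 : ζ ≠ ζ ^ 2 := fun h => h1 (mul_left_cancel₀ hζ0 (by linear_combination -h))
  rw [cubeRootFlat, sum_insert (by simp [hβ, hβ.symm, hζ0]),
    sum_insert (by simp [hβ, h1, hζ2]), sum_pair (by simp [hβ, hζζ2]), add_assoc, add_assoc]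

theorem card_cubeRootFlat (h3 : ζ ^ 3 = 1) (h1 : ζ ≠ 1) {β : K} (hβ : β ≠ 0) :
    #(cubeRootFlat ζ β) = 4 := by
  rw [card_eq_sum_ones, sum_cubeRootFlat h3 h1 hβ]

variable [Fintype K]

theorem filter_cubeRootFlat_eq (h3 : ζ ^ 3 = 1) (β : K) :
    {x ∈ univ.erase (0 : K) | cubeRootFlat ζ x = cubeRootFlat ζ β} =
      (cubeRootFlat ζ β).erase 0 := by
  ext x
  simp only [mem_filter, mem_erase, mem_univ, and_true]
  constructor
  · rintro ⟨hx0, hx⟩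
    exact ⟨hx0, hx ▸ self_mem_cubeRootFlat ζ x⟩
  · rintro ⟨hx0, hx⟩
    exact ⟨hx0, cubeRootFlat_eq_of_mem h3 hx hx0⟩

theorem cubeRootFlat_mem_VF_inv (h3 : ζ ^ 3 = 1) (h1 : ζ ≠ 1) {β : K} (hβ : β ≠ 0) :
    cubeRootFlat ζ β ∈ VF (·⁻¹) := by
  have hζ := sq_add_self_add_one_eq_zero_of_pow_three_eq_one h3 h1
  have hζ0 : ζ ≠ 0 := by rintro rfl; simp at h3
  refine mem_filter.mpr ⟨mem_univ _, card_cubeRootFlat h3 h1 hβ, ?_, ?_⟩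
  · rw [sum_cubeRootFlat h3 h1 hβ]
    simp only [id]
    linear_combination β * hζ
  · rw [sum_cubeRootFlat h3 h1 hβ, inv_zero]
    field_simp
    linear_combination hζ

variable [CharP K 2]

theorem zero_mem_of_mem_VF_inv {s : Finset K} (hs : s ∈ VF (·⁻¹)) : (0 : K) ∈ s := by
  obtain ⟨-, hcard, hsum, hinv⟩ := mem_filter.mp hs
  by_contra h0
  obtain ⟨a, b, c, d, hab, hac, had, hbc, hbd, hcd, rfl⟩ := card_eq_four.mp hcard
  simp only [mem_insert, mem_singleton, not_or] at h0
  obtain ⟨ha, hb, hc, hd⟩ := h0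
  rw [sum_insert (by simp [hab, hac, had]), sum_insert (by simp [hbc, hbd]), sum_pair hcd]
    at hsum hinv
  exact inv_add_inv_add_inv_add_inv_ne_zero (Ne.symm ha) (Ne.symm hb) (Ne.symm hc) (Ne.symm hd)
    hab hac.symm hbc.symm (by simpa [add_assoc] using hsum) (by simpa [add_assoc] using hinv)

theorem exists_eq_cubeRootFlat_of_mem_VF_inv (h3 : ζ ^ 3 = 1) (h1 : ζ ≠ 1) {s : Finset K}
    (hs : s ∈ VF (·⁻¹)) : ∃ β ≠ 0, s = cubeRootFlat ζ β := by
  have h0 := zero_mem_of_mem_VF_inv hs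
  obtain ⟨-, hcard, hsum, hinv⟩ := mem_filter.mp hs
  obtain ⟨a, b, c, hab, hac, hbc, habc⟩ :=
    card_eq_three.mp (by rw [card_erase_of_mem h0, hcard] : #(s.erase 0) = 3)
  have hs' : s = {0, a, b, c} := by rw [← habc, insert_erase h0]
  have hne : ∀ x ∈ ({a, b, c} : Finset K), x ≠ 0 := habc ▸ fun x hx => ne_of_mem_erase hx
  simp only [mem_insert, mem_singleton, forall_eq_or_imp, forall_eq] at hne
  obtain ⟨ha, hb, hc⟩ := hne
  rw [← sum_erase _ (rfl : id (0 : K) = 0), habc, sum_insert (by simp [hab, hac]),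
    sum_pair hbc] at hsum
  rw [← sum_erase _ inv_zero, habc, sum_insert (by simp [hab, hac]), sum_pair hbc] at hinv
  have hsum' : a + b + c = 0 := by simpa [add_assoc] using hsum
  have hsq := sq_add_mul_add_sq_eq_zero_of_inv_add_inv_add_inv_eq_zero ha hb hc hsum'
    (by simpa [add_assoc] using hinv)
  have hζ := sq_add_self_add_one_eq_zero_of_pow_three_eq_one h3 h1
  refine ⟨b, hb, hs'.trans ?_⟩
  rcases eq_mul_or_eq_mul_sq_of_sq_add_mul_add_sq_eq_zero hζ hsq with rfl | rfl
  · obtain rfl : c = b * ζ ^ 2 := by linear_combination hsum' - b * hζ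
    ext x; simp only [cubeRootFlat, mem_insert, mem_singleton]; tauto
  · obtain rfl : c = b * ζ := by linear_combination hsum' - b * hζ
    ext x; simp only [cubeRootFlat, mem_insert, mem_singleton]; tauto

theorem mem_VF_inv_iff (h3 : ζ ^ 3 = 1) (h1 : ζ ≠ 1) {s : Finset K} :
    s ∈ VF (·⁻¹) ↔ ∃ β ≠ 0, s = cubeRootFlat ζ β :=
  ⟨exists_eq_cubeRootFlat_of_mem_VF_inv h3 h1, by
    rintro ⟨β, hβ, rfl⟩; exact cubeRootFlat_mem_VF_inv h3 h1 hβ⟩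

theorem card_VF_inv (h3 : ζ ^ 3 = 1) (h1 : ζ ≠ 1) :
    3 * #(VF (·⁻¹ : K → K)) = Fintype.card K - 1 := by
  have hmaps : Set.MapsTo (cubeRootFlat ζ) ↑(univ.erase (0 : K)) ↑(VF (·⁻¹ : K → K)) :=
    fun x hx => cubeRootFlat_mem_VF_inv h3 h1 (ne_of_mem_erase hx)
  have hfiber :
      ∀ t ∈ VF (·⁻¹ : K → K), #{x ∈ univ.erase 0 | cubeRootFlat ζ x = t} = 3 := by
    intro t ht
    obtain ⟨β, -, rfl⟩ := exists_eq_cubeRootFlat_of_mem_VF_inv h3 h1 ht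
    rw [filter_cubeRootFlat_eq h3, card_erase_of_mem (zero_mem_of_mem_VF_inv ht),
      (mem_filter.mp ht).2.1]
  rw [← card_univ, ← card_erase_of_mem (mem_univ 0), card_eq_sum_card_fiberwise hmaps,
    sum_const_nat hfiber, mul_comm]

end CubeRootFlat

theorem vf_inverse_function_general {K : Type*} [Field K] [Fintype K] [DecidableEq K]
    (n : ℕ) (hcard : Fintype.card K = 2 ^ n) [CharP K 2]
    (ζ : K) (hζ3 : ζ ^ 3 = 1) (hζ1 : ζ ≠ 1) :
    (∀ s : Finset K,
        s ∈ VF (fun x : K => x ^ (2 ^ n - 2)) ↔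
          ∃ β : K, β ≠ 0 ∧ s = {0, β, β * ζ, β * ζ ^ 2}) ∧
      3 * (VF (fun x : K => x ^ (2 ^ n - 2))).card = 2 ^ n - 1 := by
  have hζ0 : ζ ≠ 0 := by rintro rfl; simp at hζ3
  have hK : 2 < Fintype.card K :=
    Fintype.two_lt_card_iff.mpr ⟨0, 1, ζ, zero_ne_one, hζ0.symm, hζ1.symm⟩
  have hpow : (fun x : K => x ^ (2 ^ n - 2)) = (·⁻¹) :=
    funext (hcard ▸ FiniteField.pow_card_sub_two_eq_inv hK)
  rw [hpow, ← hcard]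
  exact ⟨fun s => mem_VF_inv_iff hζ3 hζ1, card_VF_inv hζ3 hζ1⟩

theorem vf_inverse_function {K : Type*} [Field K] [Fintype K] [DecidableEq K]
    (n : ℕ) (hn : 0 < n) (hneven : Even n) (hcard : Fintype.card K = 2 ^ n) [CharP K 2]
    (ζ : K) (hζ3 : ζ ^ 3 = 1) (hζ1 : ζ ≠ 1) :
    (∀ s : Finset K,
        s ∈ VF (fun x : K => x ^ (2 ^ n - 2)) ↔
          ∃ β : K, β ≠ 0 ∧ s = {0, β, β * ζ, β * ζ ^ 2}) ∧
      3 * (VF (fun x : K => x ^ (2 ^ n - 2))).card = 2 ^ n - 1 :=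
  vf_inverse_function_general n hcard ζ hζ3 hζ1
end

section
/- Let f(x) = x^{2^t+1} on F_{2^n} with s = gcd(n,t). For distinct nonzero x1, x2 ∈ F_{2^n}, the set {0, x1, x2, x1+x2} is a vanishing flat of f if and only if x1/x2 ∈ F_{2^s} \ {0,1}. -/
/-
Writing q = 2^t, in characteristic 2 one has (x + y)^(q+1) = x^(q+1) + y^(q+1) + x^q y + y^q x, so
the values of the Gold function on the flat {0, x1, x2, x1 + x2} sum to x1^q x2 + x2^q x1, which
vanishes exactly when z = x1 / x2 satisfies z^(2^t) = z. Such t are the periods of z under squaring;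
since z^(2^n) = z in a field of 2^n elements and periods are closed under gcd and under multiples,
z^(2^t) = z iff z^(2^gcd(n,t)) = z. The flat has four distinct points precisely when z ∉ {0, 1}.
-/

open Function

theorem isPeriodicPt_pow_iff {M : Type*} [Monoid M] (p m : ℕ) (z : M) :
    IsPeriodicPt (· ^ p) m z ↔ z ^ p ^ m = z := by
  rw [IsPeriodicPt, IsFixedPt, pow_iterate]

theorem pow_pow_gcd_eq_self_iff {M : Type*} [Monoid M] (p : ℕ) {n k : ℕ} {z : M}
    (hn : z ^ p ^ n = z) : z ^ p ^ Nat.gcd n k = z ↔ z ^ p ^ k = z := by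
  simp only [← isPeriodicPt_pow_iff] at hn ⊢
  exact ⟨fun h => h.trans_dvd (Nat.gcd_dvd_right n k), hn.gcd⟩

section CharTwo

variable {K : Type*} [Field K] [CharP K 2]

theorem insert_zero_mem_VF_iff [Fintype K] [DecidableEq K] (f : K → K) {x y : K}
    (hx : x ≠ 0) (hy : y ≠ 0) (hxy : x ≠ y) :
    ({0, x, y, x + y} : Finset K) ∈ VF f ↔ f 0 + f x + f y + f (x + y) = 0 := by
  have hsum : x + y ≠ 0 := fun h => hxy (CharTwo.add_eq_zero.mp h)
  have hsum_x : x + y ≠ x := fun h => hy (by simpa using h)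
  have hsum_y : x + y ≠ y := fun h => hx (by simpa using h)
  have h0 : (0 : K) ∉ ({x, y, x + y} : Finset K) := by
    simp [hx.symm, hy.symm, hsum.symm]
  have hx' : x ∉ ({y, x + y} : Finset K) := by simp [hxy, hsum_x.symm]
  have hy' : y ∉ ({x + y} : Finset K) := by simp [hsum_y.symm]
  simp only [VF, Finset.mem_filter, Finset.mem_univ, true_and, Finset.sum_insert h0,
    Finset.sum_insert hx', Finset.sum_insert hy', Finset.card_insert_of_notMem h0,
    Finset.card_insert_of_notMem hx', Finset.card_insert_of_notMem hy', Finset.sum_singleton,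
    Finset.card_singleton, id]
  have hid : 0 + (x + (y + (x + y))) = 0 := by
    rw [zero_add, ← add_assoc, add_add_add_comm, CharTwo.add_self_eq_zero,
      CharTwo.add_self_eq_zero, add_zero]
  simp only [hid, true_and, add_assoc]

theorem gold_add_pow {R : Type*} [CommRing R] [CharP R 2] (t : ℕ) (x y : R) :
    (x + y) ^ (2 ^ t + 1) = x ^ (2 ^ t + 1) + y ^ (2 ^ t + 1) + (x ^ 2 ^ t * y + y ^ 2 ^ t * x) := by
  rw [pow_succ, add_pow_char_pow]
  ring

theorem gold_flat_sum_eq_zero_iff (t : ℕ) (x : K) {y : K} (hy : y ≠ 0) :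
    (0 : K) ^ (2 ^ t + 1) + x ^ (2 ^ t + 1) + y ^ (2 ^ t + 1) + (x + y) ^ (2 ^ t + 1) = 0 ↔
      (x / y) ^ 2 ^ t = x / y := by
  have h2 : (2 : K) = 0 := CharTwo.two_eq_zero
  have hflat : (0 : K) ^ (2 ^ t + 1) + x ^ (2 ^ t + 1) + y ^ (2 ^ t + 1) + (x + y) ^ (2 ^ t + 1) =
      x ^ 2 ^ t * y + y ^ 2 ^ t * x := by
    rw [gold_add_pow, zero_pow (Nat.succ_ne_zero _)]
    linear_combination (x ^ (2 ^ t + 1) + y ^ (2 ^ t + 1)) * h2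
  rw [hflat, CharTwo.add_eq_zero, div_pow, div_eq_div_iff (pow_ne_zero _ hy) hy, mul_comm x]

end CharTwo

theorem vf_gold_subspace_general {K : Type*} [Field K] [Fintype K] [DecidableEq K]
    (n t : ℕ) (hcard : Fintype.card K = 2 ^ n) [CharP K 2]
    (x1 x2 : K) (hx1 : x1 ≠ 0) (hx2 : x2 ≠ 0) (hne : x1 ≠ x2) :
    ({0, x1, x2, x1 + x2} : Finset K) ∈ VF (fun x : K => x ^ (2 ^ t + 1)) ↔
      ((x1 / x2) ^ (2 ^ Nat.gcd n t) = x1 / x2 ∧ x1 / x2 ≠ 0 ∧ x1 / x2 ≠ 1) := by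
  have hfix : (x1 / x2) ^ 2 ^ n = x1 / x2 := hcard ▸ FiniteField.pow_card _
  rw [insert_zero_mem_VF_iff _ hx1 hx2 hne, gold_flat_sum_eq_zero_iff t x1 hx2,
    pow_pow_gcd_eq_self_iff 2 hfix]
  exact (and_iff_left ⟨div_ne_zero hx1 hx2, (div_eq_one_iff_eq hx2).not.mpr hne⟩).symm

theorem vf_gold_subspace {K : Type*} [Field K] [Fintype K] [DecidableEq K]
    (n t : ℕ) (hn : 0 < n) (ht : 0 < t) (hcard : Fintype.card K = 2 ^ n) [CharP K 2]
    (x1 x2 : K) (hx1 : x1 ≠ 0) (hx2 : x2 ≠ 0) (hne : x1 ≠ x2) :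
    ({0, x1, x2, x1 + x2} : Finset K) ∈ VF (fun x : K => x ^ (2 ^ t + 1)) ↔
      ((x1 / x2) ^ (2 ^ Nat.gcd n t) = x1 / x2 ∧ x1 / x2 ≠ 0 ∧ x1 / x2 ≠ 1) :=
  vf_gold_subspace_general n t hcard x1 x2 hx1 hx2 hne
end

section
/- Let f be a DO polynomial over F_{2^n}, and for a ∈ F_{2^n}* let L_{f,a}(x) = f(x+a) + f(x) + f(a), an F_2-linear map, with rank h_a (so its image has size 2^{h_a}). Then the number of vanishing flats of f equals (2^{n−2}/3) · Σ_{a ∈ F_{2^n}*} (2^{n−h_a−1} − 1). -/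
/-!
Order the points of a vanishing flat: each flat yields `4!` injective quadruples, and since
`x₁ + x₂ + x₃ + x₄ = 0` in characteristic 2, these are exactly the quadruples
`(x, x + a, y, y + a)` with `a ≠ 0` and `y ∉ {x, x + a}`. The vanishing of the `f`-sum then
reads `L_a x = L_a y` for `L_a = polar f · a`, which is additive because `f` is a DO polynomial.
So for fixed `a` the admissible pairs are `(x, x + z)` with `z ∈ ker L_a \ {0, a}`, giving
`2ⁿ (|ker L_a| - 2)` of them, and `|ker L_a| = 2ⁿ / 2^{h_a}`.
-/

open Finset QuadraticMap
open scoped Nat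

theorem card_injective_image_eq_factorial {α : Type*} [DecidableEq α] [Fintype α] {m : ℕ}
    (s : Finset α) (hs : #s = m) :
    #{v : Fin m → α | Function.Injective v ∧ univ.image v = s} = m ! := by
  have mem : ∀ v : {v : Fin m → α // Function.Injective v ∧ univ.image v = s}, ∀ i,
      v.1 i ∈ s := fun ⟨v, _, hvs⟩ i => hvs ▸ mem_image_of_mem v (mem_univ i)
  have surj : ∀ v : {v : Fin m → α // Function.Injective v ∧ univ.image v = s}, ∀ z ∈ s,
      ∃ i, v.1 i = z := fun ⟨v, _, hvs⟩ z hz => by simpa [← hvs] using hz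
  let e : {v : Fin m → α // Function.Injective v ∧ univ.image v = s} ≃ (Fin m ≃ s) :=
    { toFun := fun v => Equiv.ofBijective (fun i => ⟨v.1 i, mem v i⟩)
        ⟨fun i j hij => v.2.1 (congrArg Subtype.val hij), fun z => by
          obtain ⟨i, hi⟩ := surj v z z.2
          exact ⟨i, Subtype.ext hi⟩⟩
      invFun := fun e => ⟨fun i => e i, Subtype.val_injective.comp e.injective, by
        ext z
        simp only [mem_image, mem_univ, true_and]
        exact ⟨fun ⟨i, hi⟩ => hi ▸ (e i).2,
          fun hz => ⟨e.symm ⟨z, hz⟩, by simp⟩⟩⟩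
      left_inv := fun _ => rfl
      right_inv := fun _ => Equiv.ext fun _ => rfl }
  rw [← Fintype.card_subtype, Fintype.card_congr e,
    Fintype.card_equiv (s.equivFinOfCardEq hs).symm, Fintype.card_fin]

theorem AddMonoidHom.card_image_mul_card_filter_eq_zero {G H : Type*} [AddGroup G] [Fintype G]
    [AddGroup H] [DecidableEq H] (g : G →+ H) :
    #(univ.image g) * #{x | g x = 0} = Fintype.card G := by
  have hrange : Nat.card g.range = #(univ.image g) := by
    rw [← Set.toFinset_range, ← Nat.card_eq_card_toFinset]
    rfl
  have hker : Nat.card g.ker = #{x | g x = 0} := by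
    change Nat.card {x // g x = 0} = _
    rw [Nat.card_eq_fintype_card, Fintype.card_subtype]
  rw [← hrange, ← hker, ← AddSubgroup.index_ker, AddSubgroup.index_mul_card,
    Nat.card_eq_fintype_card]

theorem Nat.eq_two_pow_sub_of_two_pow_mul_eq {k m n : ℕ} (h : 2 ^ k * m = 2 ^ n) :
    m = 2 ^ (n - k) := by
  have hle : k ≤ n := (Nat.pow_dvd_pow_iff_le_right (by norm_num)).mp (Dvd.intro m h)
  rw [← Nat.add_sub_cancel' hle, pow_add] at h
  exact Nat.eq_of_mul_eq_mul_left (by positivity) h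

-- Truncated subtraction: both sides vanish for `m = 0`.
theorem Nat.two_pow_mul_two_pow_sub_two {n : ℕ} (hn : 2 ≤ n) (m : ℕ) :
    2 ^ n * (2 ^ m - 2) = 8 * (2 ^ (n - 2) * (2 ^ (m - 1) - 1)) := by
  obtain ⟨k, rfl⟩ := Nat.exists_eq_add_of_le' hn
  rcases m with _ | m
  · simp
  · rw [Nat.add_sub_cancel, Nat.add_sub_cancel, pow_succ 2 m, ← Nat.sub_one_mul, pow_add]
    ring

section CharTwo
variable {R : Type*} [CommRing R] [CharP R 2]

theorem polar_add_left_of_sum_pow_two_pow_add (n : ℕ) (c : ℕ → ℕ → R) {f : R → R}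
    (hf : ∀ x : R, f x = ∑ i ∈ range n, ∑ j ∈ range n,
      if i < j then c i j * x ^ (2 ^ i + 2 ^ j) else 0) (x y a : R) :
    polar f (x + y) a = polar f x a + polar f y a := by
  have polar_eq : ∀ x, polar f x a = ∑ i ∈ range n, ∑ j ∈ range n,
      if i < j then c i j * (x ^ 2 ^ i * a ^ 2 ^ j + a ^ 2 ^ i * x ^ 2 ^ j) else 0 := by
    intro x
    simp only [polar, hf, ← sum_sub_distrib]
    refine sum_congr rfl fun i _ => sum_congr rfl fun j _ => ?_
    split_ifs
    · rw [pow_add, pow_add, pow_add, add_pow_char_pow, add_pow_char_pow]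
      ring
    · simp
  simp only [polar_eq, ← sum_add_distrib]
  refine sum_congr rfl fun i _ => sum_congr rfl fun j _ => ?_
  split_ifs
  · rw [add_pow_char_pow, add_pow_char_pow]
    ring
  · simp

theorem polar_eq_polar_iff (f : R → R) (x y a : R) :
    polar f x a = polar f y a ↔ f x + f (x + a) + f y + f (y + a) = 0 := by
  have : polar f x a - polar f y a = f x + f (x + a) + f y + f (y + a) := by
    simp only [polar]
    linear_combination (-f x - f (y + a)) * CharTwo.two_eq_zero (R := R)
  rw [← sub_eq_zero, this]

theorem injective_vec_add_iff (x y a : R) :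
    Function.Injective ![x, x + a, y, y + a] ↔ a ≠ 0 ∧ y ≠ x ∧ y ≠ x + a := by
  simp only [Function.Injective, Fin.forall_fin_succ, Matrix.cons_val_zero, Matrix.cons_val_succ,
    Matrix.cons_val_fin_one, IsEmpty.forall_iff, and_true, Fin.succ_inj, CharTwo.eq_add_iff_add_eq]
  grind

theorem eq_vec_add_of_sum_eq_zero {v : Fin 4 → R} (hv : ∑ i, v i = 0) :
    v = ![v 0, v 0 + (v 0 + v 1), v 2, v 2 + (v 0 + v 1)] := by
  rw [Fin.sum_univ_four] at hv
  have h1 : v 1 = v 0 + (v 0 + v 1) := by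
    linear_combination -(v 0) * CharTwo.two_eq_zero (R := R)
  have h3 : v 3 = v 2 + (v 0 + v 1) := by
    linear_combination hv - (v 0 + v 1 + v 2) * CharTwo.two_eq_zero (R := R)
  ext i
  fin_cases i <;> simp [← h1, ← h3]

end CharTwo

section VanishingFlats
variable {K : Type*} [Field K] [Fintype K] [DecidableEq K]

def orderedVF (f : K → K) : Finset (Fin 4 → K) :=
  {v | Function.Injective v ∧ ∑ i, v i = 0 ∧ ∑ i, f (v i) = 0}

theorem card_orderedVF (f : K → K) : #(orderedVF f) = 4 ! * #(VF f) := by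
  have maps : ∀ v ∈ orderedVF f, univ.image v ∈ VF f := by
    intro v hv
    simp only [orderedVF, mem_filter, mem_univ, true_and] at hv
    obtain ⟨hinj, hsum, hfsum⟩ := hv
    simp only [VF, mem_filter, mem_univ, true_and]
    rw [card_image_of_injective _ hinj, sum_image hinj.injOn, sum_image hinj.injOn]
    exact ⟨card_fin 4, hsum, hfsum⟩
  rw [card_eq_sum_card_fiberwise maps, mul_comm]
  refine sum_const_nat fun s hs => ?_
  simp only [VF, mem_filter, mem_univ, true_and] at hs
  obtain ⟨hcard, hsum, hfsum⟩ := hs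
  rw [← card_injective_image_eq_factorial s hcard]
  congr 1
  ext v
  simp only [orderedVF, mem_filter, mem_univ, true_and]
  constructor
  · exact fun ⟨⟨hinj, _⟩, himage⟩ => ⟨hinj, himage⟩
  · rintro ⟨hinj, rfl⟩
    rw [sum_image hinj.injOn] at hsum hfsum
    exact ⟨⟨hinj, hsum, hfsum⟩, rfl⟩

variable [CharP K 2]

def polarPairs (f : K → K) (a : K) : Finset (K × K) :=
  {p | polar f p.1 a = polar f p.2 a ∧ p.2 ≠ p.1 ∧ p.2 ≠ p.1 + a}

theorem vec_add_mem_orderedVF_iff (f : K → K) (x y a : K) :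
    ![x, x + a, y, y + a] ∈ orderedVF f ↔ a ≠ 0 ∧ (x, y) ∈ polarPairs f a := by
  have hsum : x + (x + a) + y + (y + a) = 0 := by
    linear_combination (x + y + a) * CharTwo.two_eq_zero (R := K)
  simp only [orderedVF, polarPairs, mem_filter, mem_univ, true_and, Fin.sum_univ_four,
    Matrix.cons_val_zero, Matrix.cons_val_one, Matrix.cons_val, injective_vec_add_iff,
    polar_eq_polar_iff, hsum]
  tauto

theorem card_orderedVF_eq_sum_card_polarPairs (f : K → K) :
    #(orderedVF f) = ∑ a ∈ univ.erase 0, #(polarPairs f a) := by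
  rw [← card_sigma]
  refine card_nbij' (fun v => ⟨v 0 + v 1, (v 0, v 2)⟩)
    (fun q => ![q.2.1, q.2.1 + q.1, q.2.2, q.2.2 + q.1]) (fun v hv => ?_) (fun q hq => ?_)
    (fun v hv => ?_) (fun ⟨a, x, y⟩ _ => ?_)
  · rw [mem_coe] at hv
    rw [eq_vec_add_of_sum_eq_zero (mem_filter.mp hv).2.2.1, vec_add_mem_orderedVF_iff] at hv
    simpa using hv
  · simpa [vec_add_mem_orderedVF_iff] using hq
  · exact (eq_vec_add_of_sum_eq_zero (mem_filter.mp hv).2.2.1).symm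
  · simp [← add_assoc, CharTwo.add_self_eq_zero]

theorem card_polarPairs {f : K → K}
    (hf : ∀ x y a, polar f (x + y) a = polar f x a + polar f y a) {a : K} (ha : a ≠ 0) :
    #(polarPairs f a) = Fintype.card K * (#{z | polar f z a = 0} - 2) := by
  have h0 : polar f 0 a = 0 := by simpa using hf 0 0 a
  have hf0 : f 0 = 0 := by simpa [polar] using h0
  have haa : polar f a a = 0 := by simp [polar, CharTwo.add_self_eq_zero, hf0, CharTwo.sub_eq_add]
  have hsub : ({0, a} : Finset K) ⊆ ({z | polar f z a = 0} : Finset K) := by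
    simp [insert_subset_iff, h0, haa]
  rw [← card_pair ha.symm, ← card_sdiff_of_subset hsub, ← card_univ, ← card_product]
  -- `(x, y) ↦ (x, x + y)` carries `polarPairs f a` onto `univ ×ˢ (ker \ {0, a})`.
  refine card_equiv ((Equiv.refl K).prodShear fun x => Equiv.addLeft x) fun p => ?_
  simp only [polarPairs, mem_filter, mem_univ, true_and, mem_product, mem_sdiff, mem_insert,
    mem_singleton, Equiv.prodShear_apply, Equiv.coe_refl, id, Equiv.coe_addLeft, hf]
  grind

end VanishingFlats

theorem card_vf_DO {K : Type*} [Field K] [Fintype K] [DecidableEq K]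
    (n : ℕ) (hn : 2 ≤ n) (hcard : Fintype.card K = 2 ^ n) [CharP K 2]
    (c : ℕ → ℕ → K) (f : K → K)
    (hf : ∀ x : K, f x = ∑ i ∈ Finset.range n, ∑ j ∈ Finset.range n,
      if i < j then c i j * x ^ (2 ^ i + 2 ^ j) else 0)
    (h : K → ℕ)
    (hrank : ∀ a : K, a ≠ 0 →
      (Finset.univ.image (fun x : K => f (x + a) + f x + f a)).card = 2 ^ h a) :
    3 * (VF f).card
      = 2 ^ (n - 2) * ∑ a ∈ Finset.univ.erase (0 : K), (2 ^ (n - h a - 1) - 1) := by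
  have hpolar : ∀ x y a, polar f (x + y) a = polar f x a + polar f y a :=
    polar_add_left_of_sum_pow_two_pow_add n c hf
  have hker : ∀ a ≠ 0, #{z | polar f z a = 0} = 2 ^ (n - h a) := by
    intro a ha
    have hL := (AddMonoidHom.mk' (polar f · a) fun x y => hpolar x y a)
      |>.card_image_mul_card_filter_eq_zero
    have hpolar_eq : (polar f · a) = fun x => f (x + a) + f x + f a :=
      funext fun x => by simp only [polar, CharTwo.sub_eq_add]
    simp only [AddMonoidHom.mk'_apply] at hL
    rw [hpolar_eq, hrank a ha, hcard] at hL
    exact Nat.eq_two_pow_sub_of_two_pow_mul_eq hL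
  have : 8 * (3 * #(VF f)) = 8 * (2 ^ (n - 2) * ∑ a ∈ univ.erase 0, (2 ^ (n - h a - 1) - 1)) :=
    calc 8 * (3 * #(VF f))
        = #(orderedVF f) := by rw [card_orderedVF, show 4 ! = 24 from rfl]; ring
    _ = ∑ a ∈ univ.erase 0, #(polarPairs f a) := card_orderedVF_eq_sum_card_polarPairs f
    _ = ∑ a ∈ univ.erase 0, 2 ^ n * (2 ^ (n - h a) - 2) := sum_congr rfl fun a ha => by
      rw [card_polarPairs hpolar (ne_of_mem_erase ha), hcard, hker a (ne_of_mem_erase ha)]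
    _ = _ := by simp only [Nat.two_pow_mul_two_pow_sub_two hn, ← mul_sum]
  omega
end

section
/- Let s = gcd(t,n) with n/s odd, and let z ∈ F_{2^s} ⊆ F_{2^n} be nonzero. Then the equation x^{2^t} + x = z has no solution x ∈ F_{2^n}. Moreover, for x, y ∈ F_{2^n} and z1, z2 ∈ F_{2^s}, the equality x^{2^t} + x + z1 = y^{2^t} + y + z2 holds if and only if z1 = z2 and x + y ∈ F_{2^s}. -/
/-!
In characteristic `p`, if `x ^ p ^ t = x + z` with `z` fixed by `x ↦ x ^ p ^ t`, then iterating
the additive map `x ↦ x ^ p ^ t` gives `x ^ p ^ (t * j) = x + j • z`. In a field with `p ^ n`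
elements take `j = n / gcd t n`: then `n ∣ t * j`, so the left side is `x`, and `j • z = 0` forces
`z = 0` once `p ∤ j`. In characteristic `2` the equation
`x ^ 2 ^ t + x + z₁ = y ^ 2 ^ t + y + z₂` says `(x + y) ^ 2 ^ t = (x + y) + (z₁ + z₂)`, so
`z₁ + z₂ = 0` and `x + y` is fixed by `x ↦ x ^ 2 ^ t`, i.e. by `x ↦ x ^ 2 ^ gcd t n`.
-/

section PowPowFixed

variable {M : Type*} [Monoid M] {p a b : ℕ} {x : M}

theorem isPeriodicPt_pow_iff_s18 : Function.IsPeriodicPt (· ^ p) a x ↔ x ^ p ^ a = x := by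
  rw [Function.IsPeriodicPt, Function.IsFixedPt, pow_iterate]

theorem pow_pow_eq_self_of_dvd (h : x ^ p ^ a = x) (hab : a ∣ b) : x ^ p ^ b = x := by
  obtain ⟨c, rfl⟩ := hab
  exact isPeriodicPt_pow_iff_s18.mp ((isPeriodicPt_pow_iff_s18.mpr h).mul_const c)

theorem pow_pow_gcd_eq_self (ha : x ^ p ^ a = x) (hb : x ^ p ^ b = x) :
    x ^ p ^ Nat.gcd a b = x :=
  isPeriodicPt_pow_iff_s18.mp ((isPeriodicPt_pow_iff_s18.mpr ha).gcd (isPeriodicPt_pow_iff_s18.mpr hb))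

end PowPowFixed

theorem pow_char_pow_mul_eq_add_nsmul {R : Type*} [CommSemiring R] {p t : ℕ} [ExpChar R p]
    {x z : R} (hz : z ^ p ^ t = z) (hx : x ^ p ^ t = x + z) (j : ℕ) :
    x ^ p ^ (t * j) = x + j • z := by
  induction j with
  | zero => simp
  | succ j ih =>
    calc x ^ p ^ (t * (j + 1)) = iterateFrobenius R p t (x ^ p ^ (t * j)) := by
          rw [iterateFrobenius_def, ← pow_mul, ← pow_add, Nat.mul_succ]
      _ = x + (j + 1) • z := by
          rw [ih, map_add, map_nsmul, iterateFrobenius_def, iterateFrobenius_def, hx, hz,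
            succ_nsmul, add_assoc, add_comm z]

theorem FiniteField.eq_zero_of_pow_char_pow_eq_add {K : Type*} [Field K] [Fintype K] {p n t : ℕ}
    [CharP K p] (hcard : Fintype.card K = p ^ n) (hp : ¬p ∣ n / Nat.gcd t n) {x z : K}
    (hz : z ^ p ^ Nat.gcd t n = z) (hx : x ^ p ^ t = x + z) : z = 0 := by
  have : Fact p.Prime := ⟨CharP.char_is_prime K p⟩
  have hzt : z ^ p ^ t = z := pow_pow_eq_self_of_dvd hz (Nat.gcd_dvd_left t n)
  have hn_dvd : n ∣ t * (n / Nat.gcd t n) :=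
    Nat.mul_div_assoc t (Nat.gcd_dvd_right t n) ▸ Nat.dvd_lcm_right t n
  have hx_fixed : x ^ p ^ (t * (n / Nat.gcd t n)) = x :=
    pow_pow_eq_self_of_dvd (hcard ▸ FiniteField.pow_card x) hn_dvd
  have hsmul : (n / Nat.gcd t n) • z = 0 := by
    simpa [hx_fixed] using pow_char_pow_mul_eq_add_nsmul hzt hx (n / Nat.gcd t n)
  rw [nsmul_eq_mul, mul_eq_zero, CharP.cast_eq_zero_iff K p] at hsmul
  exact hsmul.resolve_left hp

theorem CharTwo.pow_two_pow_add_self_add_eq_iff {R : Type*} [CommRing R] [CharP R 2] (t : ℕ)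
    (x y z₁ z₂ : R) :
    x ^ 2 ^ t + x + z₁ = y ^ 2 ^ t + y + z₂ ↔ (x + y) ^ 2 ^ t = (x + y) + (z₁ + z₂) := by
  rw [add_pow_char_pow]
  constructor
  · intro h
    linear_combination h + (y ^ 2 ^ t - x - z₁) * CharTwo.two_eq_zero (R := R)
  · intro h
    linear_combination h - (y ^ 2 ^ t - x - z₁) * CharTwo.two_eq_zero (R := R)

theorem gold_trace_equation_general {K : Type*} [Field K] [Fintype K]
    (n t : ℕ) (hcard : Fintype.card K = 2 ^ n) [CharP K 2]
    (hodd : Odd (n / Nat.gcd t n)) :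
    (∀ z : K, z ^ (2 ^ Nat.gcd t n) = z → z ≠ 0 → ¬∃ x : K, x ^ (2 ^ t) + x = z) ∧
      (∀ x y z1 z2 : K, z1 ^ (2 ^ Nat.gcd t n) = z1 → z2 ^ (2 ^ Nat.gcd t n) = z2 →
        (x ^ (2 ^ t) + x + z1 = y ^ (2 ^ t) + y + z2 ↔
          z1 = z2 ∧ (x + y) ^ (2 ^ Nat.gcd t n) = x + y)) := by
  have hsolv {x z : K} : z ^ 2 ^ Nat.gcd t n = z → x ^ 2 ^ t = x + z → z = 0 :=
    FiniteField.eq_zero_of_pow_char_pow_eq_add hcard hodd.not_two_dvd_nat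
  refine ⟨fun z hz hz0 ⟨x, hx⟩ => hz0 (hsolv (x := x) hz ?_), fun x y z1 z2 h1 h2 => ?_⟩
  · linear_combination hx - x * CharTwo.two_eq_zero (R := K)
  have hz : (z1 + z2) ^ 2 ^ Nat.gcd t n = z1 + z2 := by rw [add_pow_char_pow, h1, h2]
  rw [CharTwo.pow_two_pow_add_self_add_eq_iff]
  constructor
  · intro h
    have hz0 := hsolv hz h
    rw [hz0, add_zero] at h
    exact ⟨CharTwo.add_eq_zero.mp hz0, pow_pow_gcd_eq_self h (hcard ▸ FiniteField.pow_card _)⟩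
  · rintro ⟨rfl, hw⟩
    rw [CharTwo.add_self_eq_zero, add_zero]
    exact pow_pow_eq_self_of_dvd hw (Nat.gcd_dvd_left t n)

theorem gold_trace_equation {K : Type*} [Field K] [Fintype K] [DecidableEq K]
    (n t : ℕ) (hn : 0 < n) (ht : 0 < t) (hcard : Fintype.card K = 2 ^ n) [CharP K 2]
    (hodd : Odd (n / Nat.gcd t n)) :
    (∀ z : K, z ^ (2 ^ Nat.gcd t n) = z → z ≠ 0 → ¬∃ x : K, x ^ (2 ^ t) + x = z) ∧
      (∀ x y z1 z2 : K, z1 ^ (2 ^ Nat.gcd t n) = z1 → z2 ^ (2 ^ Nat.gcd t n) = z2 →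
        (x ^ (2 ^ t) + x + z1 = y ^ (2 ^ t) + y + z2 ↔
          z1 = z2 ∧ (x + y) ^ (2 ^ Nat.gcd t n) = x + y)) :=
  gold_trace_equation_general n t hcard hodd
end
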